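/- arXiv:2402.08693 — 4 statements merged into one kernel-verified Lean document; each statement's English description precedes it below -/
import Mathlib

section
/- Let a, b be real numbers with a > -1 and b > -1, let k, s be positive integers, and let z be a real number with |z| > sup_{x ∈ [0,1]} x^k (1-x)^s (equivalently |z| > k^k s^s / (k+s)^{k+s}). Then (z · Γ(a+b+2) / (Γ(a+1) Γ(b+1))) · ∫_0^1 x^a (1-x)^b / (z - x^k (1-x)^s) dx = Σ_{n=0}^∞ (a+1)_{kn} (b+1)_{sn} / ((a+b+2)_{(k+s)n} · z^n), where both the integral and the series converge. -/
/-!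
Since `x ^ k * (1 - x) ^ s ≤ k ^ k * s ^ s / (k + s) ^ (k + s) < |z|` on `[0, 1]` (weighted AM-GM),
`1 / (z - x ^ k * (1 - x) ^ s) = ∑ (x ^ k * (1 - x) ^ s) ^ n / z ^ (n + 1)` with a geometric
majorant, so the series may be integrated termwise against the Beta weight `x ^ a * (1 - x) ^ b`.
The `n`-th moment is the Beta integral `B(a + 1 + k n, b + 1 + s n)`, and
`Γ(c + m) = (c)_m Γ(c)` turns its ratio to `B(a + 1, b + 1)` into the Pochhammer quotient.
-/

open Real MeasureTheory

noncomputable def risingFactorial (a : ℝ) (n : ℕ) : ℝ := ∏ i ∈ Finset.range n, (a + i)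

open Set

theorem hasSum_pow_div_pow_succ {𝕜 : Type*} [NormedField 𝕜] [CompleteSpace 𝕜] {w z : 𝕜}
    (h : ‖w‖ < ‖z‖) : HasSum (fun n : ℕ => w ^ n / z ^ (n + 1)) (z - w)⁻¹ := by
  have hz : z ≠ 0 := norm_pos_iff.1 ((norm_nonneg w).trans_lt h)
  have hwz : ‖w / z‖ < 1 := by rwa [norm_div, div_lt_one (norm_pos_iff.2 hz)]
  have hterm : (fun n : ℕ => w ^ n / z ^ (n + 1)) = fun n => z⁻¹ * (w / z) ^ n :=
    funext fun n => by rw [div_pow, pow_succ]; field_simp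
  have hsum : (z - w)⁻¹ = z⁻¹ * (1 - w / z)⁻¹ := by
    rw [← mul_inv, mul_sub, mul_one, mul_div_cancel₀ _ hz]
  rw [hterm, hsum]
  exact (hasSum_geometric_of_norm_lt_one hwz).mul_left z⁻¹

section GeometricExpansion

variable {α 𝕜 : Type*} [MeasurableSpace α] [RCLike 𝕜] {μ : Measure α} {g w : α → 𝕜} {M : ℝ}
  {z : 𝕜}

theorem integrable_div_sub (hg : Integrable g μ) (hw : AEStronglyMeasurable w μ)
    (hwM : ∀ᵐ x ∂μ, ‖w x‖ ≤ M) (hMz : M < ‖z‖) :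
    Integrable (fun x => g x / (z - w x)) μ := by
  simp_rw [div_eq_mul_inv]
  refine hg.mul_bdd (c := (‖z‖ - M)⁻¹) (aestronglyMeasurable_const.sub hw).inv₀ ?_
  filter_upwards [hwM] with x hx
  rw [norm_inv]
  exact inv_anti₀ (sub_pos.2 hMz) (by linarith [norm_sub_norm_le z (w x)])

theorem hasSum_integral_div_sub (hg : Integrable g μ) (hw : AEStronglyMeasurable w μ)
    (hM : 0 ≤ M) (hwM : ∀ᵐ x ∂μ, ‖w x‖ ≤ M) (hMz : M < ‖z‖) :
    HasSum (fun n : ℕ => (∫ x, g x * w x ^ n ∂μ) / z ^ (n + 1)) (∫ x, g x / (z - w x) ∂μ) := by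
  have hz : 0 < ‖z‖ := hM.trans_lt hMz
  have hF_int (n : ℕ) : Integrable (fun x => g x * w x ^ n / z ^ (n + 1)) μ :=
    (hg.mul_bdd (c := M ^ n) (hw.pow n) (hwM.mono fun x hx => by
      rw [Pi.pow_apply, norm_pow]; exact pow_le_pow_left₀ (norm_nonneg _) hx n)).div_const _
  have hF_le (n : ℕ) : ∫ x, ‖g x * w x ^ n / z ^ (n + 1)‖ ∂μ ≤
      (∫ x, ‖g x‖ ∂μ) / ‖z‖ * (M / ‖z‖) ^ n :=
    calc ∫ x, ‖g x * w x ^ n / z ^ (n + 1)‖ ∂μ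
        ≤ ∫ x, ‖g x‖ * (M ^ n / ‖z‖ ^ (n + 1)) ∂μ := by
          refine integral_mono_ae (hF_int n).norm (hg.norm.mul_const _) ?_
          filter_upwards [hwM] with x hx
          rw [norm_div, norm_mul, norm_pow, norm_pow, mul_div_assoc]
          gcongr
      _ = (∫ x, ‖g x‖ ∂μ) / ‖z‖ * (M / ‖z‖) ^ n := by
          rw [integral_mul_const, div_pow, pow_succ]; field_simp
  have hF_sum : Summable fun n : ℕ => ∫ x, ‖g x * w x ^ n / z ^ (n + 1)‖ ∂μ :=
    .of_nonneg_of_le (fun n => integral_nonneg fun x => norm_nonneg _) hF_le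
      ((summable_geometric_of_lt_one (div_nonneg hM hz.le) ((div_lt_one hz).2 hMz)).mul_left _)
  have hsum := hasSum_integral_of_summable_integral_norm hF_int hF_sum
  simp only [fun n => integral_div (μ := μ) (z ^ (n + 1)) (fun x => g x * w x ^ n)] at hsum
  have hpointwise :
      ∫ x, g x / (z - w x) ∂μ = ∫ x, ∑' n : ℕ, g x * w x ^ n / z ^ (n + 1) ∂μ := by
    refine integral_congr_ae (hwM.mono fun x hx => ?_)
    simp only [mul_div_assoc]
    rw [tsum_mul_left, (hasSum_pow_div_pow_succ (hx.trans_lt hMz)).tsum_eq, div_eq_mul_inv]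
  rwa [hpointwise]

end GeometricExpansion

theorem risingFactorial_pos {c : ℝ} (hc : 0 < c) (m : ℕ) : 0 < risingFactorial c m :=
  Finset.prod_pos fun i _ => by positivity

theorem Gamma_add_nat_eq_risingFactorial_mul {c : ℝ} (hc : 0 < c) (m : ℕ) :
    Gamma (c + m) = risingFactorial c m * Gamma c := by
  induction m with
  | zero => simp [risingFactorial]
  | succ m ih =>
    rw [Nat.cast_succ, ← add_assoc, Gamma_add_one (by positivity), ih, risingFactorial,
      risingFactorial, Finset.prod_range_succ]
    ring

-- The right-hand side is the integrand of `Complex.betaIntegral (a + 1) (b + 1)`, verbatim.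
theorem ofReal_rpow_mul_one_sub_rpow {a b x : ℝ} (hx : x ∈ Ioo 0 1) :
    ((x ^ a * (1 - x) ^ b : ℝ) : ℂ) =
      (x : ℂ) ^ ((a + 1 : ℂ) - 1) * (1 - (x : ℂ)) ^ ((b + 1 : ℂ) - 1) := by
  rw [add_sub_cancel_right, add_sub_cancel_right, Complex.ofReal_mul,
    Complex.ofReal_cpow hx.1.le, Complex.ofReal_cpow (sub_nonneg.2 hx.2.le), Complex.ofReal_sub,
    Complex.ofReal_one]

theorem integrableOn_rpow_mul_one_sub_rpow {a b : ℝ} (ha : -1 < a) (hb : -1 < b) :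
    IntegrableOn (fun x : ℝ => x ^ a * (1 - x) ^ b) (Ioo 0 1) := by
  have h := Complex.betaIntegral_convergent (u := a + 1) (v := b + 1)
    (by simp; linarith) (by simp; linarith)
  rw [intervalIntegrable_iff_integrableOn_Ioc_of_le zero_le_one,
    integrableOn_Ioc_iff_integrableOn_Ioo] at h
  have h' :=
    (h.congr_fun (fun x hx => (ofReal_rpow_mul_one_sub_rpow hx).symm) measurableSet_Ioo).re
  simpa only [IntegrableOn, RCLike.re_to_complex, Complex.ofReal_re] using h'

theorem integral_rpow_mul_one_sub_rpow {a b : ℝ} (ha : -1 < a) (hb : -1 < b) :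
    ∫ x in Ioo (0 : ℝ) 1, x ^ a * (1 - x) ^ b =
      Gamma (a + 1) * Gamma (b + 1) / Gamma (a + b + 2) := by
  have h := Complex.betaIntegral_eq_Gamma_mul_div (a + 1) (b + 1)
    (by simp; linarith) (by simp; linarith)
  rw [Complex.betaIntegral, intervalIntegral.integral_of_le zero_le_one,
    integral_Ioc_eq_integral_Ioo,
    setIntegral_congr_fun measurableSet_Ioo (fun x hx => (ofReal_rpow_mul_one_sub_rpow hx).symm),
    integral_complex_ofReal, show (a + 1 : ℂ) + (b + 1) = ((a + b + 2 : ℝ) : ℂ) by push_cast; ring,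
    ← Complex.ofReal_one, ← Complex.ofReal_add, ← Complex.ofReal_add, Complex.Gamma_ofReal,
    Complex.Gamma_ofReal, Complex.Gamma_ofReal] at h
  exact_mod_cast h

theorem integral_rpow_mul_one_sub_rpow_mul_pow {a b : ℝ} (ha : -1 < a) (hb : -1 < b) (m l : ℕ) :
    ∫ x in Ioo (0 : ℝ) 1, x ^ a * (1 - x) ^ b * (x ^ m * (1 - x) ^ l) =
      Gamma (a + 1) * Gamma (b + 1) / Gamma (a + b + 2) *
        (risingFactorial (a + 1) m * risingFactorial (b + 1) l /
          risingFactorial (a + b + 2) (m + l)) := by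
  have hbeta := integral_rpow_mul_one_sub_rpow (a := a + m) (b := b + l)
    (by linarith [m.cast_nonneg (α := ℝ)]) (by linarith [l.cast_nonneg (α := ℝ)])
  have hGamma := (Gamma_pos_of_pos (by linarith : 0 < a + b + 2)).ne'
  have hrising := (risingFactorial_pos (by linarith : 0 < a + b + 2) (m + l)).ne'
  rw [setIntegral_congr_fun (g := fun x : ℝ => x ^ (a + m) * (1 - x) ^ (b + l))
      measurableSet_Ioo fun x hx => by
        dsimp only
        rw [rpow_add_natCast hx.1.ne', rpow_add_natCast (sub_pos.2 hx.2).ne']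
        ring,
    hbeta, add_right_comm a, add_right_comm b,
    show a + m + (b + l) + 2 = a + b + 2 + ((m + l : ℕ) : ℝ) by push_cast; ring,
    Gamma_add_nat_eq_risingFactorial_mul (by linarith),
    Gamma_add_nat_eq_risingFactorial_mul (by linarith),
    Gamma_add_nat_eq_risingFactorial_mul (by linarith)]
  field_simp

theorem pow_mul_one_sub_pow_le {k s : ℕ} (hk : 0 < k) (hs : 0 < s) {x : ℝ} (hx₀ : 0 ≤ x)
    (hx₁ : x ≤ 1) : x ^ k * (1 - x) ^ s ≤ (k : ℝ) ^ k * (s : ℝ) ^ s / ((k : ℝ) + s) ^ (k + s) := by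
  have hk' : (0 : ℝ) < k := Nat.cast_pos.2 hk
  have hs' : (0 : ℝ) < s := Nat.cast_pos.2 hs
  set n : ℝ := k + s
  have hn : 0 < n := by positivity
  have hp₁ : 0 ≤ x * n / k := by positivity
  have hp₂ : 0 ≤ (1 - x) * n / s := div_nonneg (mul_nonneg (by linarith) hn.le) hs'.le
  have hamgm := geom_mean_le_arith_mean2_weighted (div_nonneg hk'.le hn.le)
    (div_nonneg hs'.le hn.le) hp₁ hp₂ (by rw [← add_div, div_self hn.ne'])
  have hmean : k / n * (x * n / k) + s / n * ((1 - x) * n / s) = 1 := by field_simp; ring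
  have hpow : (x * n / k) ^ k * ((1 - x) * n / s) ^ s ≤ 1 := by
    have h := pow_le_one₀ (n := k + s) (by positivity) (hamgm.trans hmean.le)
    rwa [mul_pow, ← rpow_mul_natCast hp₁, ← rpow_mul_natCast hp₂, Nat.cast_add,
      div_mul_cancel₀ _ hn.ne', div_mul_cancel₀ _ hn.ne', rpow_natCast, rpow_natCast] at h
  calc x ^ k * (1 - x) ^ s
      = (x * n / k) ^ k * ((1 - x) * n / s) ^ s * ((k : ℝ) ^ k * (s : ℝ) ^ s / n ^ (k + s)) := by
        rw [div_pow, div_pow, mul_pow, mul_pow, pow_add]; field_simp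
    _ ≤ (k : ℝ) ^ k * (s : ℝ) ^ s / n ^ (k + s) := mul_le_of_le_one_left (by positivity) hpow

theorem stmt0 (a b : ℝ) (ha : a > -1) (hb : b > -1) (k s : ℕ) (hk : 0 < k) (hs : 0 < s)
    (z : ℝ) (hz : |z| > (k : ℝ) ^ k * (s : ℝ) ^ s / ((k : ℝ) + s) ^ (k + s)) :
    IntervalIntegrable (fun x : ℝ => x ^ a * (1 - x) ^ b / (z - x ^ k * (1 - x) ^ s))
      volume 0 1 ∧
    Summable (fun n : ℕ =>
      risingFactorial (a + 1) (k * n) * risingFactorial (b + 1) (s * n) /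
        (risingFactorial (a + b + 2) ((k + s) * n) * z ^ n)) ∧
    z * Real.Gamma (a + b + 2) / (Real.Gamma (a + 1) * Real.Gamma (b + 1)) *
      ∫ x in (0:ℝ)..1, x ^ a * (1 - x) ^ b / (z - x ^ k * (1 - x) ^ s) =
    ∑' n : ℕ,
      risingFactorial (a + 1) (k * n) * risingFactorial (b + 1) (s * n) /
        (risingFactorial (a + b + 2) ((k + s) * n) * z ^ n) := by
  set M : ℝ := (k : ℝ) ^ k * (s : ℝ) ^ s / ((k : ℝ) + s) ^ (k + s)
  have hM : 0 ≤ M := by positivity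
  have hMz : M < ‖z‖ := hz
  have hwM : ∀ᵐ x ∂(volume.restrict (Ioo (0 : ℝ) 1)), ‖x ^ k * (1 - x) ^ s‖ ≤ M := by
    refine ae_restrict_of_forall_mem measurableSet_Ioo fun x hx => ?_
    rw [norm_of_nonneg (by have := sub_pos.2 hx.2; have := hx.1; positivity)]
    exact pow_mul_one_sub_pow_le hk hs hx.1.le hx.2.le
  have hg := integrableOn_rpow_mul_one_sub_rpow ha hb
  have hw : AEStronglyMeasurable (fun x : ℝ => x ^ k * (1 - x) ^ s) (volume.restrict (Ioo 0 1)) :=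
    (by fun_prop : Continuous fun x : ℝ => x ^ k * (1 - x) ^ s).aestronglyMeasurable
  have hterm (n : ℕ) : z * Gamma (a + b + 2) / (Gamma (a + 1) * Gamma (b + 1)) *
      ((∫ x in Ioo (0 : ℝ) 1, x ^ a * (1 - x) ^ b * (x ^ k * (1 - x) ^ s) ^ n) / z ^ (n + 1)) =
      risingFactorial (a + 1) (k * n) * risingFactorial (b + 1) (s * n) /
        (risingFactorial (a + b + 2) ((k + s) * n) * z ^ n) := by
    have hz₀ : z ≠ 0 := norm_pos_iff.1 (hM.trans_lt hMz)
    have hGa := (Gamma_pos_of_pos (by linarith : 0 < a + 1)).ne'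
    have hGb := (Gamma_pos_of_pos (by linarith : 0 < b + 1)).ne'
    have hGab := (Gamma_pos_of_pos (by linarith : 0 < a + b + 2)).ne'
    simp_rw [mul_pow, ← pow_mul]
    rw [integral_rpow_mul_one_sub_rpow_mul_pow ha hb, add_mul]
    field_simp
    ring
  have hsum := (hasSum_integral_div_sub hg hw hM hwM hMz).mul_left
    (z * Gamma (a + b + 2) / (Gamma (a + 1) * Gamma (b + 1)))
  simp only [hterm] at hsum
  rw [intervalIntegrable_iff_integrableOn_Ioc_of_le zero_le_one,
    integrableOn_Ioc_iff_integrableOn_Ioo, intervalIntegral.integral_of_le zero_le_one,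
    integral_Ioc_eq_integral_Ioo]
  exact ⟨integrable_div_sub hg hw hwM hMz, hsum.summable, hsum.tsum_eq.symm⟩
end

section
/- ∫_0^1 x^{-1/2} (x² - 5x + 16) / (-48 - x(1-x)²) dx = -π√3 / 9. -/
open Real Set intervalIntegral

/-!
The denominator factors as `-(x + 3) * (x ^ 2 - 5 * x + 16)`, so the integrand is
`-x ^ (-1/2) / (x + 3)`. Under `x = u ^ 2` this becomes `-2 / (u ^ 2 + 3)`, with primitive
`-(2 / √3) * arctan (u / √3)`; the value follows from `arctan (1 / √3) = π / 6`.
-/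

lemma hasDerivAt_arctan_sqrt_div_sqrt {a x : ℝ} (ha : 0 < a) (hx : 0 < x) :
    HasDerivAt (fun y => 2 / √a * arctan (√y / √a)) (x ^ (-(1:ℝ) / 2) / (x + a)) x := by
  refine ((((hasDerivAt_sqrt hx.ne').div_const √a).arctan).const_mul (2 / √a)).congr_deriv ?_
  rw [neg_div, rpow_neg hx.le, ← sqrt_eq_rpow]
  have hsa : 0 < √a := sqrt_pos.2 ha
  have hsx : 0 < √x := sqrt_pos.2 hx
  field_simp
  rw [sq_sqrt hx.le, sq_sqrt ha.le]
  ring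

theorem integral_rpow_neg_half_div_add {a b : ℝ} (ha : 0 < a) (hb : 0 ≤ b) :
    ∫ x in (0:ℝ)..b, x ^ (-(1:ℝ) / 2) / (x + a) = 2 / √a * arctan (√b / √a) := by
  have hcont : ContinuousOn (fun y => 2 / √a * arctan (√y / √a)) (Icc 0 b) := by fun_prop
  have hderiv : ∀ x ∈ Ioo 0 b, HasDerivAt (fun y => 2 / √a * arctan (√y / √a))
      (x ^ (-(1:ℝ) / 2) / (x + a)) x :=
    fun x hx => hasDerivAt_arctan_sqrt_div_sqrt ha hx.1
  have hint : IntervalIntegrable (fun x : ℝ => x ^ (-(1:ℝ) / 2) / (x + a))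
      MeasureTheory.volume 0 b := by
    refine intervalIntegrable_deriv_of_nonneg (uIcc_of_le hb ▸ hcont) ?_ ?_ <;>
      rw [min_eq_left hb, max_eq_right hb]
    · exact hderiv
    · intro x hx
      have := hx.1
      positivity
  rw [integral_eq_sub_of_hasDerivAt_of_le hb hcont hderiv hint]
  simp

-- At `x = -3` both sides are `0`, as `t / 0 = 0`.
lemma mul_div_neg_forty_eight_sub (t x : ℝ) :
    t * (x ^ 2 - 5 * x + 16) / (-48 - x * (1 - x) ^ 2) = -(t / (x + 3)) := by
  have hq : x ^ 2 - 5 * x + 16 ≠ 0 := by nlinarith [sq_nonneg (x - 5 / 2)]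
  rw [show -48 - x * (1 - x) ^ 2 = -((x + 3) * (x ^ 2 - 5 * x + 16)) by ring,
    mul_comm (x + 3), div_neg, ← div_div, mul_div_cancel_right₀ _ hq]

theorem stmt4 :
    ∫ x in (0:ℝ)..1, x ^ (-(1 : ℝ) / 2) * (x ^ 2 - 5 * x + 16) / (-48 - x * (1 - x) ^ 2) =
      -π * Real.sqrt 3 / 9 := by
  simp_rw [mul_div_neg_forty_eight_sub, integral_neg]
  rw [integral_rpow_neg_half_div_add three_pos zero_le_one, sqrt_one, one_div,
    arctan_inv_sqrt_three]
  have h3 : √3 ^ 2 = 3 := sq_sqrt zero_le_three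
  field_simp
  linear_combination 6 * h3
end

section
/- Let w be a real number with 0 < w < 1 and 4w⁶ < 27(1 - w²). Then Σ_{n=0}^∞ (4w⁶/(27(w² - 1)))^n · (1)_n (1/2)_n · (n(4w⁴ + 6w² - 18) + 2w⁴ + 5w² - 15) / ((11/6)_n (7/6)_n) = -15 · (arcsin(w)/w) · √(1 - w²), where the series converges absolutely. -/
set_option maxHeartbeats 1000000

open Real

namespace Stmt5Aux

lemma rf_succ (a : ℝ) (n : ℕ) : risingFactorial a (n+1) = risingFactorial a n * (a + n) :=
  Finset.prod_range_succ _ _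

lemma rf_pos {a : ℝ} (ha : 0 < a) (n : ℕ) : 0 < risingFactorial a n :=
  Finset.prod_pos fun i _ => by positivity

noncomputable def rr (n : ℕ) : ℝ :=
  risingFactorial 1 n * risingFactorial (1/2) n /
    (risingFactorial (11/6) n * risingFactorial (7/6) n)

lemma rr_zero : rr 0 = 1 := by simp [rr, risingFactorial]

lemma rr_pos (n : ℕ) : 0 < rr n := by
  have h1 := rf_pos (by norm_num : (0:ℝ) < 1) n
  have h2 := rf_pos (by norm_num : (0:ℝ) < 1/2) n
  have h3 := rf_pos (by norm_num : (0:ℝ) < 11/6) n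
  have h4 := rf_pos (by norm_num : (0:ℝ) < 7/6) n
  exact div_pos (mul_pos h1 h2) (mul_pos h3 h4)

lemma rr_succ (n : ℕ) :
    rr (n+1) = rr n * (((1:ℝ)+n) * (1/2+n) / ((11/6+n) * (7/6+n))) := by
  have h3 := (rf_pos (by norm_num : (0:ℝ) < 11/6) n).ne'
  have h4 := (rf_pos (by norm_num : (0:ℝ) < 7/6) n).ne'
  have hn1 : ((11:ℝ)/6 + n) ≠ 0 := by positivity
  have hn2 : ((7:ℝ)/6 + n) ≠ 0 := by positivity
  simp only [rr, rf_succ]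
  field_simp

lemma rr_le_one (n : ℕ) : rr n ≤ 1 := by
  induction n with
  | zero => simp [rr_zero]
  | succ n ih =>
    rw [rr_succ]
    have hpos : (0:ℝ) < (11/6+n) * (7/6+n) := by positivity
    have h1 : ((1:ℝ)+n) * (1/2+n) / ((11/6+n) * (7/6+n)) ≤ 1 := by
      rw [div_le_one hpos]; nlinarith [Nat.cast_nonneg (α := ℝ) n]
    have h0 : (0:ℝ) ≤ ((1:ℝ)+n) * (1/2+n) / ((11/6+n) * (7/6+n)) := by positivity
    exact mul_le_one₀ ih h0 h1

noncomputable def cc (n : ℕ) : ℝ := (-4/27)^n * rr n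

lemma cc_abs (n : ℕ) : |cc n| = (4/27)^n * rr n := by
  rw [cc, abs_mul, abs_pow, abs_of_nonneg (rr_pos n).le,
    show |(-4/27 : ℝ)| = 4/27 from by norm_num]

noncomputable def Gf (n : ℕ) (t : ℝ) : ℝ :=
  cc n * (t^(6*n+1) * ((4*t^4+6*t^2-18)*n + (2*t^4+5*t^2-15))) / (1-t^2)^(n+1)

noncomputable def Gf' (n : ℕ) (t : ℝ) : ℝ :=
  (cc n * (((6*n+1 : ℕ) : ℝ) * t^(6*n) * ((4*t^4+6*t^2-18)*n + (2*t^4+5*t^2-15))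
      + t^(6*n+1) * ((16*t^3+12*t)*n + (8*t^3+10*t))) * (1-t^2)^(n+1)
    - cc n * (t^(6*n+1) * ((4*t^4+6*t^2-18)*n + (2*t^4+5*t^2-15)))
      * (((n:ℝ)+1) * (1-t^2)^n * (-(2*t)))) / ((1-t^2)^(n+1))^2

noncomputable def phi (n : ℕ) (t : ℝ) : ℝ := Gf n t * Real.sqrt (1-t^2)

noncomputable def Hf (n : ℕ) (t : ℝ) : ℝ :=
  -108 * cc n * (((n:ℝ)+5/6) * ((n:ℝ)+1/6)) * t^(6*n) / (1-t^2)^(n+1)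

noncomputable def psi (n : ℕ) (t : ℝ) : ℝ := Hf n t * Real.sqrt (1-t^2)

lemma phi_zero (n : ℕ) : phi n 0 = 0 := by
  simp [phi, Gf, pow_succ]

lemma hasDerivAt_Gf (n : ℕ) {t : ℝ} (ht : (1:ℝ)-t^2 ≠ 0) :
    HasDerivAt (fun x => Gf n x) (Gf' n t) t := by
  have h4 : HasDerivAt (fun x : ℝ => x^4) (4*t^3) t := by simpa using hasDerivAt_pow 4 t
  have h2 : HasDerivAt (fun x : ℝ => x^2) (2*t) t := by simpa using hasDerivAt_pow 2 t
  have hq : HasDerivAt (fun x : ℝ => (4*x^4+6*x^2-18)*(n:ℝ) + (2*x^4+5*x^2-15))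
      ((16*t^3+12*t)*(n:ℝ) + (8*t^3+10*t)) t := by
    have := ((((h4.const_mul (4:ℝ)).add (h2.const_mul (6:ℝ))).sub_const 18).mul_const (n:ℝ)).add
      (((h4.const_mul (2:ℝ)).add (h2.const_mul (5:ℝ))).sub_const 15)
    exact this.congr_deriv (by ring)
  have hp : HasDerivAt (fun x : ℝ => x^(6*n+1)) (((6*n+1 : ℕ):ℝ) * t^(6*n)) t := by
    simpa using hasDerivAt_pow (6*n+1) t
  have hnum : HasDerivAt
      (fun x : ℝ => cc n * (x^(6*n+1) * ((4*x^4+6*x^2-18)*(n:ℝ) + (2*x^4+5*x^2-15))))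
      (cc n * (((6*n+1 : ℕ):ℝ) * t^(6*n) * ((4*t^4+6*t^2-18)*(n:ℝ) + (2*t^4+5*t^2-15))
        + t^(6*n+1) * ((16*t^3+12*t)*(n:ℝ) + (8*t^3+10*t)))) t :=
    (hp.mul hq).const_mul _
  have hbase : HasDerivAt (fun x : ℝ => 1 - x^2) (-(2*t)) t := by
    have := (hasDerivAt_const t (1:ℝ)).sub h2; simp only [zero_sub] at this; exact this
  have hden : HasDerivAt (fun x : ℝ => (1-x^2)^(n+1)) (((n:ℝ)+1) * (1-t^2)^n * (-(2*t))) t := by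
    have := hbase.pow (n+1)
    simp only [Nat.add_sub_cancel] at this
    exact this.congr_deriv (by push_cast; ring)
  have := hnum.div hden (pow_ne_zero _ ht)
  exact this

lemma Hf_succ (n : ℕ) {t : ℝ} (ht : (1:ℝ)-t^2 ≠ 0) :
    Hf (n+1) t = 16 * cc n * (((1:ℝ)+n) * (1/2+n)) * t^(6*n+6) / (1-t^2)^(n+2) := by
  have hcc : cc (n+1) = cc n * (-4/27) * (((1:ℝ)+n) * (1/2+n) / ((11/6+n) * (7/6+n))) := by
    simp only [cc, pow_succ, rr_succ]; ring
  have h1 : ((11:ℝ)/6 + n) ≠ 0 := by positivity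
  have h2 : ((7:ℝ)/6 + n) ≠ 0 := by positivity
  simp only [Hf, hcc]
  push_cast
  rw [show 6*(n+1) = 6*n+6 from by ring, show n+1+1 = n+2 from rfl]
  field_simp
  ring

lemma key (g g' h S t : ℝ) (hS : S ≠ 0) (hD : S^2 = 1 - t^2)
    (E : g' * (1-t^2) - g * t = h * (1-t^2)) :
    g' * S + g * (-(2*t)/(2*S)) = h * S := by
  have h1 : g' * S + g * (-(2*t)/(2*S)) = (g' * S^2 - g*t)/S := by field_simp; ring
  rw [h1, hD, E, ← hD]
  field_simp

lemma hasDerivAt_phi (n : ℕ) {t : ℝ} (ht : t^2 < 1) :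
    HasDerivAt (fun x => phi n x) (psi n t - psi (n+1) t) t := by
  have hD : (0:ℝ) < 1 - t^2 := by linarith
  have hS0 : (0:ℝ) < Real.sqrt (1-t^2) := Real.sqrt_pos.mpr hD
  have h2 : HasDerivAt (fun x : ℝ => x^2) (2*t) t := by simpa using hasDerivAt_pow 2 t
  have hbase : HasDerivAt (fun x : ℝ => 1 - x^2) (-(2*t)) t := by
    have := (hasDerivAt_const t (1:ℝ)).sub h2; simp only [zero_sub] at this; exact this
  have hsq : HasDerivAt (fun x : ℝ => Real.sqrt (1-x^2)) (-(2*t)/(2*Real.sqrt (1-t^2))) t :=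
    hbase.sqrt hD.ne'
  have hmul := (hasDerivAt_Gf n hD.ne').mul hsq
  have hE : Gf' n t * (1-t^2) - Gf n t * t = (Hf n t - Hf (n+1) t) * (1-t^2) := by
    rw [Hf_succ n hD.ne']
    simp only [Gf, Gf', Hf]
    push_cast
    field_simp
    ring
  have heq := key (Gf n t) (Gf' n t) (Hf n t - Hf (n+1) t) (Real.sqrt (1-t^2)) t hS0.ne'
    (Real.sq_sqrt hD.le) hE
  have : psi n t - psi (n+1) t
      = Gf' n t * Real.sqrt (1-t^2) + Gf n t * (-(2*t)/(2*Real.sqrt (1-t^2))) := by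
    rw [heq]; simp only [psi]; ring
  rw [this]
  exact hmul

end Stmt5Aux

namespace Stmt5Aux

lemma cont_psi (n : ℕ) {s : Set ℝ} (hs : ∀ t ∈ s, (1:ℝ)-t^2 ≠ 0) :
    ContinuousOn (fun t => psi n t) s := by
  simp only [psi, Hf]
  apply ContinuousOn.mul
  · apply ContinuousOn.div
    · exact (by fun_prop :
        Continuous fun t : ℝ => -108 * cc n * (((n:ℝ)+5/6) * ((n:ℝ)+1/6)) * t^(6*n)).continuousOn
    · exact (by fun_prop : Continuous fun t : ℝ => (1-t^2)^(n+1)).continuousOn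
    · intro t htm; exact pow_ne_zero _ (hs t htm)
  · exact (Real.continuous_sqrt.comp (by fun_prop : Continuous fun t : ℝ => 1 - t^2)).continuousOn

lemma psi_zero_eq {t : ℝ} (ht : t^2 < 1) :
    psi 0 t = -15 * (1 / Real.sqrt (1-t^2)) := by
  have hD : (0:ℝ) < 1-t^2 := by linarith
  have hS : Real.sqrt (1-t^2) ≠ 0 := (Real.sqrt_pos.mpr hD).ne'
  have hss : Real.sqrt (1-t^2) * Real.sqrt (1-t^2) = 1-t^2 := Real.mul_self_sqrt hD.le
  simp only [psi, Hf, cc, rr_zero, pow_zero, Nat.cast_zero, Nat.mul_zero]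
  rw [show ((1:ℝ)-t^2)^1 = Real.sqrt (1-t^2) * Real.sqrt (1-t^2) from by rw [pow_one, hss]]
  field_simp
  ring

end Stmt5Aux

open Stmt5Aux Filter in
theorem stmt5 (w : ℝ) (hw0 : 0 < w) (hw1 : w < 1) (hw2 : 4 * w ^ 6 < 27 * (1 - w ^ 2)) :
    Summable (fun n : ℕ =>
      |(4 * w ^ 6 / (27 * (w ^ 2 - 1))) ^ n * risingFactorial 1 n * risingFactorial (1 / 2) n *
          ((n : ℝ) * (4 * w ^ 4 + 6 * w ^ 2 - 18) + 2 * w ^ 4 + 5 * w ^ 2 - 15) /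
        (risingFactorial (11 / 6) n * risingFactorial (7 / 6) n)|) ∧
    ∑' n : ℕ,
        (4 * w ^ 6 / (27 * (w ^ 2 - 1))) ^ n * risingFactorial 1 n * risingFactorial (1 / 2) n *
            ((n : ℝ) * (4 * w ^ 4 + 6 * w ^ 2 - 18) + 2 * w ^ 4 + 5 * w ^ 2 - 15) /
          (risingFactorial (11 / 6) n * risingFactorial (7 / 6) n) =
      -15 * (Real.arcsin w / w) * Real.sqrt (1 - w ^ 2) := by
  have hw2' : (0:ℝ) < 1 - w^2 := by nlinarith
  have hwne : w ≠ 0 := hw0.ne'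
  have hS0 : (0:ℝ) < Real.sqrt (1-w^2) := Real.sqrt_pos.mpr hw2'
  have hSS : Real.sqrt (1-w^2) ^ 2 = 1-w^2 := Real.sq_sqrt hw2'.le
  set S : ℝ := Real.sqrt (1-w^2) with hSdef
  set ρ : ℝ := 4*w^6/(27*(1-w^2)) with hρdef
  have hρ0 : 0 ≤ ρ := by positivity
  have hρ1 : ρ < 1 := by rw [hρdef, div_lt_one (by positivity)]; linarith
  have hρb : ρ = (-(-4/27)) * w^6/(1-w^2) := by
    rw [hρdef, div_eq_div_iff (by positivity) hw2'.ne']; ring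
  have hρn : ∀ n : ℕ, ρ^n = (4/27)^n * w^(6*n) / (1-w^2)^n := by
    intro n
    rw [hρb, div_pow, mul_pow, ← pow_mul]
    norm_num
  -- range facts
  have hsq : ∀ t ∈ Set.uIcc (0:ℝ) w, t^2 < 1 := by
    intro t htm
    rw [Set.uIcc_of_le hw0.le] at htm
    obtain ⟨h1, h2⟩ := htm
    nlinarith
  -- the summand equals phi n w * (S/w)
  have hxb : 4*w^6/(27*(w^2-1)) = (-4/27)*w^6/(1-w^2) := by
    rw [div_eq_div_iff (by nlinarith : 27*(w^2-1) ≠ 0) hw2'.ne']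
    ring
  have ha : ∀ n : ℕ,
      (4 * w ^ 6 / (27 * (w ^ 2 - 1))) ^ n * risingFactorial 1 n * risingFactorial (1 / 2) n *
          ((n : ℝ) * (4 * w ^ 4 + 6 * w ^ 2 - 18) + 2 * w ^ 4 + 5 * w ^ 2 - 15) /
        (risingFactorial (11 / 6) n * risingFactorial (7 / 6) n)
      = phi n w * (S / w) := by
    intro n
    have h1 : phi n w * (S/w) = Gf n w * (1-w^2) / w := by
      rw [show Gf n w * (1-w^2) / w = Gf n w * S^2 / w from by rw [hSS]]
      simp only [phi]; ring
    rw [h1]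
    simp only [Gf, cc, rr]
    rw [hxb, div_pow, mul_pow, ← pow_mul]
    have h3 := (rf_pos (by norm_num : (0:ℝ) < 11/6) n).ne'
    have h4 := (rf_pos (by norm_num : (0:ℝ) < 7/6) n).ne'
    field_simp
    ring
  -- absolute value bound
  have hAbnd : |4*w^4+6*w^2-18| ≤ 18 := by rw [abs_le]; constructor <;> nlinarith
  have hBbnd : |2*w^4+5*w^2-15| ≤ 15 := by rw [abs_le]; constructor <;> nlinarith
  have hb : ∀ n : ℕ,
      |(4 * w ^ 6 / (27 * (w ^ 2 - 1))) ^ n * risingFactorial 1 n * risingFactorial (1 / 2) n *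
          ((n : ℝ) * (4 * w ^ 4 + 6 * w ^ 2 - 18) + 2 * w ^ 4 + 5 * w ^ 2 - 15) /
        (risingFactorial (11 / 6) n * risingFactorial (7 / 6) n)|
      ≤ ρ^n * (18*(n:ℝ)+15) := by
    intro n
    have h1 := rf_pos (by norm_num : (0:ℝ) < 1) n
    have h2 := rf_pos (by norm_num : (0:ℝ) < 1/2) n
    have h3 := rf_pos (by norm_num : (0:ℝ) < 11/6) n
    have h4 := rf_pos (by norm_num : (0:ℝ) < 7/6) n
    have hx : |4*w^6/(27*(w^2-1))| = ρ := by
      rw [abs_div, abs_of_nonneg (by positivity : (0:ℝ) ≤ 4*w^6),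
        abs_of_neg (by nlinarith : 27*(w^2-1) < 0), hρdef]
      rw [show -(27*(w^2-1)) = 27*(1-w^2) from by ring]
    have hm : |(n : ℝ) * (4*w^4+6*w^2-18) + 2*w^4+5*w^2-15| ≤ 18*(n:ℝ)+15 := by
      rw [show (n : ℝ) * (4*w^4+6*w^2-18) + 2*w^4+5*w^2-15
        = (n : ℝ) * (4*w^4+6*w^2-18) + (2*w^4+5*w^2-15) from by ring]
      have h6 := abs_add_le ((n : ℝ) * (4*w^4+6*w^2-18)) (2*w^4+5*w^2-15)
      rw [abs_mul, abs_of_nonneg (Nat.cast_nonneg (α := ℝ) n)] at h6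
      have h5 : (n:ℝ) * |4*w^4+6*w^2-18| ≤ (n:ℝ)*18 :=
        mul_le_mul_of_nonneg_left hAbnd (Nat.cast_nonneg n)
      have := hBbnd
      linarith
    rw [abs_div, abs_mul, abs_mul, abs_mul, abs_pow, hx,
      abs_of_nonneg h1.le, abs_of_nonneg h2.le, abs_of_nonneg (mul_pos h3 h4).le]
    have hrr : risingFactorial 1 n * risingFactorial (1/2) n / (risingFactorial (11/6) n * risingFactorial (7/6) n) ≤ 1 := by
      have := rr_le_one n
      simpa [rr] using this
    calc ρ ^ n * risingFactorial 1 n * risingFactorial (1/2) n *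
          |(n : ℝ) * (4*w^4+6*w^2-18) + 2*w^4+5*w^2-15| /
          (risingFactorial (11/6) n * risingFactorial (7/6) n)
        = ρ ^ n * (risingFactorial 1 n * risingFactorial (1/2) n / (risingFactorial (11/6) n * risingFactorial (7/6) n)) * |(n : ℝ) * (4*w^4+6*w^2-18) + 2*w^4+5*w^2-15| := by
          have hd : (0:ℝ) < risingFactorial (11/6) n * risingFactorial (7/6) n := mul_pos h3 h4
          rw [div_eq_iff hd.ne',
            mul_assoc (ρ^n * (risingFactorial 1 n * risingFactorial (1/2) n / (risingFactorial (11/6) n * risingFactorial (7/6) n))) _ _,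
            mul_comm (|(n : ℝ) * (4*w^4+6*w^2-18) + 2*w^4+5*w^2-15|) (risingFactorial (11/6) n * risingFactorial (7/6) n),
            ← mul_assoc,
            mul_assoc (ρ^n) _ (risingFactorial (11/6) n * risingFactorial (7/6) n),
            div_mul_cancel₀ _ hd.ne']
          ring
      _ ≤ ρ ^ n * 1 * (18*(n:ℝ)+15) := by
          apply mul_le_mul _ hm (abs_nonneg _) (by positivity)
          exact mul_le_mul_of_nonneg_left hrr (by positivity)
      _ = ρ^n * (18*(n:ℝ)+15) := by ring
  have hmaj : Summable (fun n : ℕ => ρ^n * (18*(n:ℝ)+15)) := by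
    have hn : ‖ρ‖ < 1 := by rw [Real.norm_eq_abs, abs_of_nonneg hρ0]; exact hρ1
    have h1 := summable_pow_mul_geometric_of_norm_lt_one 1 hn
    have h2 := summable_geometric_of_lt_one hρ0 hρ1
    exact ((h1.mul_left 18).add (h2.mul_left 15)).congr (fun n => by push_cast; ring)
  have hsumabs : Summable (fun n : ℕ =>
      |(4 * w ^ 6 / (27 * (w ^ 2 - 1))) ^ n * risingFactorial 1 n * risingFactorial (1 / 2) n *
          ((n : ℝ) * (4 * w ^ 4 + 6 * w ^ 2 - 18) + 2 * w ^ 4 + 5 * w ^ 2 - 15) /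
        (risingFactorial (11 / 6) n * risingFactorial (7 / 6) n)|) :=
    Summable.of_nonneg_of_le (fun n => abs_nonneg _) hb hmaj
  refine ⟨hsumabs, ?_⟩
  -- summability of phi
  have hsumterm := summable_abs_iff.mp hsumabs
  have hsumphi : Summable (fun n : ℕ => phi n w) := by
    have := hsumterm.mul_right (w/S)
    apply this.congr
    intro n
    rw [ha n]
    field_simp
  -- integrals
  have hne : ∀ t ∈ Set.uIcc (0:ℝ) w, (1:ℝ)-t^2 ≠ 0 := by
    intro t htm; have := hsq t htm; nlinarith
  have hint : ∀ n : ℕ, IntervalIntegrable (fun t => psi n t) MeasureTheory.volume 0 w :=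
    fun n => (cont_psi n hne).intervalIntegrable
  set I : ℕ → ℝ := fun n => ∫ t in (0:ℝ)..w, psi n t with hIdef
  have hstep : ∀ n : ℕ, phi n w = I n - I (n+1) := by
    intro n
    have hderiv : ∀ t ∈ Set.uIcc (0:ℝ) w,
        HasDerivAt (fun x => phi n x) ((fun t => psi n t - psi (n+1) t) t) t :=
      fun t htm => hasDerivAt_phi n (hsq t htm)
    have hii : IntervalIntegrable (fun t => psi n t - psi (n+1) t) MeasureTheory.volume 0 w :=
      (hint n).sub (hint (n+1))
    have hftc := intervalIntegral.integral_eq_sub_of_hasDerivAt hderiv hii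
    rw [intervalIntegral.integral_sub (hint n) (hint (n+1)), phi_zero, sub_zero] at hftc
    rw [← hftc]
  have hpartial : ∀ N : ℕ, ∑ n ∈ Finset.range N, phi n w = I 0 - I N := by
    intro N
    calc ∑ n ∈ Finset.range N, phi n w = ∑ n ∈ Finset.range N, (I n - I (n+1)) :=
          Finset.sum_congr rfl (fun n _ => hstep n)
      _ = I 0 - I N := Finset.sum_range_sub' I N
  have hI0 : I 0 = -15 * Real.arcsin w := by
    have hd : ∀ t ∈ Set.uIcc (0:ℝ) w,
        HasDerivAt (fun x => -15 * Real.arcsin x) (psi 0 t) t := by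
      intro t htm
      have ht2 := hsq t htm
      have ht1 : t ≠ -1 := by intro h; rw [h] at ht2; norm_num at ht2
      have ht1' : t ≠ 1 := by intro h; rw [h] at ht2; norm_num at ht2
      have := (Real.hasDerivAt_arcsin ht1 ht1').const_mul (-15 : ℝ)
      rw [psi_zero_eq ht2]
      exact this
    have h7 := intervalIntegral.integral_eq_sub_of_hasDerivAt hd (hint 0)
    have h8 : I 0 = ∫ t in (0:ℝ)..w, psi 0 t := rfl
    rw [h8, h7, Real.arcsin_zero]
    ring
  -- I N → 0
  have hIbnd : ∀ n : ℕ, ‖I n‖ ≤ 108/(1-w^2) * ((n:ℝ)+1)^2 * ρ^n * |w - 0| := by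
    intro n
    apply intervalIntegral.norm_integral_le_of_norm_le_const
    intro t htm
    have htm' : t ∈ Set.uIcc (0:ℝ) w := Set.uIoc_subset_uIcc htm
    rw [Set.uIcc_of_le hw0.le] at htm'
    obtain ⟨ht0, htw⟩ := htm'
    have ht2 : t^2 < 1 := by nlinarith
    have hDt : (0:ℝ) < 1-t^2 := by linarith
    have hDw : (1:ℝ)-w^2 ≤ 1-t^2 := by nlinarith
    have hs1 : Real.sqrt (1-t^2) ≤ 1 := Real.sqrt_le_one.mpr (by nlinarith)
    rw [Real.norm_eq_abs]
    simp only [psi]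
    rw [abs_mul, abs_of_nonneg (Real.sqrt_nonneg _)]
    calc |Hf n t| * Real.sqrt (1-t^2) ≤ |Hf n t| * 1 :=
          mul_le_mul_of_nonneg_left hs1 (abs_nonneg _)
      _ = |Hf n t| := mul_one _
      _ ≤ 108/(1-w^2) * ((n:ℝ)+1)^2 * ρ^n := by
          simp only [Hf]
          rw [abs_div, abs_mul, abs_mul, abs_mul, abs_pow, abs_pow, cc_abs,
            abs_of_nonneg ht0, abs_of_nonneg hDt.le,
            abs_of_nonneg (by positivity : (0:ℝ) ≤ ((n:ℝ)+5/6) * ((n:ℝ)+1/6)),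
            show |(-108 : ℝ)| = 108 from by norm_num]
          rw [hρn n]
          have e1 : (4/27:ℝ)^n * rr n ≤ (4/27)^n :=
            mul_le_of_le_one_right (by positivity) (rr_le_one n)
          have e2 : ((n:ℝ)+5/6) * ((n:ℝ)+1/6) ≤ ((n:ℝ)+1)^2 := by nlinarith [Nat.cast_nonneg (α := ℝ) n]
          have e3 : t^(6*n) ≤ w^(6*n) := pow_le_pow_left₀ ht0 htw _
          have e4 : (1-w^2)^(n+1) ≤ (1-t^2)^(n+1) := pow_le_pow_left₀ hw2'.le hDw _
          calc 108 * ((4/27:ℝ)^n * rr n) * (((n:ℝ)+5/6) * ((n:ℝ)+1/6)) * t^(6*n) / (1-t^2)^(n+1)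
              ≤ 108 * (4/27)^n * ((n:ℝ)+1)^2 * w^(6*n) / (1-w^2)^(n+1) := by
                have m1 : 108 * ((4/27:ℝ)^n * rr n) ≤ 108 * (4/27:ℝ)^n :=
                  mul_le_mul_of_nonneg_left e1 (by norm_num : (0:ℝ) ≤ 108)
                have m2 : 108 * ((4/27:ℝ)^n * rr n) * (((n:ℝ)+5/6) * ((n:ℝ)+1/6))
                    ≤ 108 * (4/27:ℝ)^n * ((n:ℝ)+1)^2 :=
                  mul_le_mul m1 e2 (by positivity) (by positivity)
                have m3 : 108 * ((4/27:ℝ)^n * rr n) * (((n:ℝ)+5/6) * ((n:ℝ)+1/6)) * t^(6*n)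
                    ≤ 108 * (4/27:ℝ)^n * ((n:ℝ)+1)^2 * w^(6*n) :=
                  mul_le_mul m2 e3 (by positivity) (by positivity)
                exact div_le_div₀ (by positivity) m3 (by positivity) e4
            _ = 108/(1-w^2) * ((n:ℝ)+1)^2 * ((4/27)^n * w^(6*n) / (1-w^2)^n) := by
                rw [pow_succ]; field_simp; ring
  have hmaj2 : Summable (fun n : ℕ => 108/(1-w^2) * ((n:ℝ)+1)^2 * ρ^n * |w - 0|) := by
    have hn : ‖ρ‖ < 1 := by rw [Real.norm_eq_abs, abs_of_nonneg hρ0]; exact hρ1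
    have h2 := summable_pow_mul_geometric_of_norm_lt_one 2 hn
    have h1 := summable_pow_mul_geometric_of_norm_lt_one 1 hn
    have h0 := summable_geometric_of_lt_one hρ0 hρ1
    have : Summable (fun n : ℕ => ((n:ℝ)+1)^2 * ρ^n) :=
      ((h2.add (h1.mul_left 2)).add h0).congr (fun n => by push_cast; ring)
    exact ((this.mul_left (108/(1-w^2))).mul_right (|w-0|)).congr (fun n => by ring)
  have hItend : Tendsto I atTop (nhds 0) :=
    squeeze_zero_norm hIbnd hmaj2.tendsto_atTop_zero
  have h2' : Tendsto (fun N => ∑ n ∈ Finset.range N, phi n w) atTop (nhds (-15 * Real.arcsin w)) := by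
    have h9 : Tendsto (fun N => I 0 - I N) atTop (nhds (I 0 - 0)) :=
      tendsto_const_nhds.sub hItend
    rw [sub_zero] at h9
    have h10 := h9.congr (fun N => (hpartial N).symm)
    rwa [hI0] at h10
  have htsumphi : ∑' n : ℕ, phi n w = -15 * Real.arcsin w :=
    tendsto_nhds_unique hsumphi.hasSum.tendsto_sum_nat h2'
  calc ∑' n : ℕ,
        (4 * w ^ 6 / (27 * (w ^ 2 - 1))) ^ n * risingFactorial 1 n * risingFactorial (1 / 2) n *
            ((n : ℝ) * (4 * w ^ 4 + 6 * w ^ 2 - 18) + 2 * w ^ 4 + 5 * w ^ 2 - 15) /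
          (risingFactorial (11 / 6) n * risingFactorial (7 / 6) n)
      = ∑' n : ℕ, phi n w * (S / w) := tsum_congr ha
    _ = (∑' n : ℕ, phi n w) * (S / w) := tsum_mul_right
    _ = -15 * Real.arcsin w * (S / w) := by rw [htsumphi]
    _ = -15 * (Real.arcsin w / w) * S := by ring
end

section
/- 1024 · √3 · π = Σ_{k=0}^∞ (1 / (9^k · C(8k, 4k))) · (5717/(8k+1) - 413/(8k+3) - 45/(8k+5) + 5/(8k+7)), where the series converges absolutely. (The prefactor 1024 equals 2^{10}.) -/
/-!
With t = x(1 - x), the beta integral ∫₀¹ tᵖ dx = 1 / ((2p + 1) C(2p, p)) turns the k-th term into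
∫₀¹ (t⁴/9)ᵏ P(t) dx with P(t) = 1024 (2 - t)(3 - t²). Summing the geometric series under the
integral gives 9216 (2 - t) / (3 + t²), and since (x² + x + 1)(x² - 3x + 3) = 3 + t² this is
4608 / (x² + x + 1) + 4608 / (x² - 3x + 3), whose integral over [0, 1] is two arctangent
differences, each equal to π/6.
-/

open Real intervalIntegral

theorem mem_Icc_of_mem_uIoc {a b x : ℝ} (hab : a ≤ b) (hx : x ∈ Set.uIoc a b) :
    x ∈ Set.Icc a b :=
  Set.Ioc_subset_Icc_self (by rwa [Set.uIoc_of_le hab] at hx)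

theorem mul_one_sub_mem_Icc {x : ℝ} (hx : x ∈ Set.Icc (0 : ℝ) 1) :
    x * (1 - x) ∈ Set.Icc (0 : ℝ) 1 :=
  ⟨mul_nonneg hx.1 (by linarith [hx.2]), by nlinarith [hx.1, hx.2]⟩

theorem hasDerivAt_mul_one_sub_pow_succ_mul (p : ℕ) (x : ℝ) :
    HasDerivAt (fun x : ℝ => (x * (1 - x)) ^ (p + 1) * (2 * x - 1))
      ((4 * p + 6) * (x * (1 - x)) ^ (p + 1) - (p + 1) * (x * (1 - x)) ^ p) x := by
  have ht : HasDerivAt (fun x : ℝ => x * (1 - x)) (1 - 2 * x) x := by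
    refine ((hasDerivAt_id' x).mul ((hasDerivAt_id' x).const_sub 1)).congr_deriv ?_
    ring
  refine ((ht.pow (p + 1)).mul (((hasDerivAt_id' x).const_mul 2).sub_const 1)).congr_deriv ?_
  simp only [Nat.add_sub_cancel, Pi.pow_apply]
  push_cast
  ring

theorem integral_mul_one_sub_pow_succ (p : ℕ) :
    ∫ x in (0 : ℝ)..1, (x * (1 - x)) ^ (p + 1) =
      (p + 1) / (2 * (2 * p + 3)) * ∫ x in (0 : ℝ)..1, (x * (1 - x)) ^ p := by
  have hint (q : ℕ) :
      IntervalIntegrable (fun x : ℝ => (x * (1 - x)) ^ q) MeasureTheory.volume 0 1 :=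
    (by fun_prop : Continuous fun x : ℝ => (x * (1 - x)) ^ q).intervalIntegrable 0 1
  have hFTC := integral_eq_sub_of_hasDerivAt (fun x _ => hasDerivAt_mul_one_sub_pow_succ_mul p x)
    (((hint (p + 1)).const_mul _).sub ((hint p).const_mul _))
  rw [integral_sub ((hint (p + 1)).const_mul _) ((hint p).const_mul _), integral_const_mul,
    integral_const_mul] at hFTC
  norm_num at hFTC
  field_simp
  linear_combination hFTC

theorem integral_mul_one_sub_pow (p : ℕ) :
    ∫ x in (0 : ℝ)..1, (x * (1 - x)) ^ p = 1 / ((2 * p + 1) * p.centralBinom) := by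
  induction p with
  | zero => simp
  | succ p ih =>
    have hrec : ((p + 1 : ℕ) : ℝ) * (p + 1).centralBinom = 2 * (2 * p + 1) * p.centralBinom :=
      mod_cast Nat.succ_mul_centralBinom_succ p
    have hc₀ : (p.centralBinom : ℝ) ≠ 0 := by exact_mod_cast (Nat.centralBinom_pos _).ne'
    have hc₁ : ((p + 1).centralBinom : ℝ) ≠ 0 := by exact_mod_cast (Nat.centralBinom_pos _).ne'
    rw [integral_mul_one_sub_pow_succ, ih]
    push_cast at hrec ⊢
    field_simp
    linear_combination (2 * p + 3) * hrec

theorem integral_one_div_sub_sq_add_sq (a b c : ℝ) {d : ℝ} (hd : d ≠ 0) :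
    ∫ x in a..b, 1 / ((x - c) ^ 2 + d ^ 2) =
      (arctan ((b - c) / d) - arctan ((a - c) / d)) / d := by
  have hpos (x : ℝ) : 0 < (x - c) ^ 2 + d ^ 2 := by positivity
  have hderiv (x : ℝ) :
      HasDerivAt (fun x => arctan ((x - c) / d) / d) (1 / ((x - c) ^ 2 + d ^ 2)) x := by
    refine ((((hasDerivAt_id' x).sub_const c).div_const d).arctan.div_const d).congr_deriv ?_
    field_simp
    ring
  rw [integral_eq_sub_of_hasDerivAt (fun x _ => hderiv x)
    ((continuous_const.div (by fun_prop) fun x => (hpos x).ne').intervalIntegrable a b)]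
  ring

noncomputable def seriesTerm (k : ℕ) : ℝ :=
  1 / (9 ^ k * (Nat.choose (8 * k) (4 * k) : ℝ)) *
    (5717 / (8 * (k : ℝ) + 1) - 413 / (8 * (k : ℝ) + 3) -
      45 / (8 * (k : ℝ) + 5) + 5 / (8 * (k : ℝ) + 7))

noncomputable def seriesIntegrand (k : ℕ) (x : ℝ) : ℝ :=
  ((x * (1 - x)) ^ 4 / 9) ^ k *
    (6144 - 3072 * (x * (1 - x)) - 2048 * (x * (1 - x)) ^ 2 + 1024 * (x * (1 - x)) ^ 3)

theorem continuous_seriesIntegrand (k : ℕ) : Continuous (seriesIntegrand k) := by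
  unfold seriesIntegrand
  fun_prop

theorem integral_seriesIntegrand (k : ℕ) :
    ∫ x in (0 : ℝ)..1, seriesIntegrand k x = 1 / 9 ^ k *
      (6144 * (∫ x in (0 : ℝ)..1, (x * (1 - x)) ^ (4 * k))
        - 3072 * (∫ x in (0 : ℝ)..1, (x * (1 - x)) ^ (4 * k + 1))
        - 2048 * (∫ x in (0 : ℝ)..1, (x * (1 - x)) ^ (4 * k + 2))
        + 1024 * ∫ x in (0 : ℝ)..1, (x * (1 - x)) ^ (4 * k + 3)) := by
  have hexpand : seriesIntegrand k = fun x => 1 / 9 ^ k *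
      (6144 * (x * (1 - x)) ^ (4 * k) - 3072 * (x * (1 - x)) ^ (4 * k + 1)
        - 2048 * (x * (1 - x)) ^ (4 * k + 2) + 1024 * (x * (1 - x)) ^ (4 * k + 3)) := by
    ext x
    simp only [seriesIntegrand]
    rw [div_pow, ← pow_mul]
    ring
  rw [hexpand, integral_const_mul, integral_add, integral_sub, integral_sub, integral_const_mul,
    integral_const_mul, integral_const_mul, integral_const_mul]
  all_goals exact (Continuous.intervalIntegrable (by fun_prop) _ _)

theorem seriesTerm_eq_integral (k : ℕ) :
    seriesTerm k = ∫ x in (0 : ℝ)..1, seriesIntegrand k x := by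
  have hC : ((8 * k).choose (4 * k) : ℝ) ≠ 0 := by
    exact_mod_cast (Nat.choose_pos (by omega)).ne'
  have hI₀ := integral_mul_one_sub_pow (4 * k)
  rw [Nat.centralBinom_eq_two_mul_choose, show 2 * (4 * k) = 8 * k by ring] at hI₀
  rw [integral_seriesIntegrand, integral_mul_one_sub_pow_succ (4 * k + 2),
    integral_mul_one_sub_pow_succ (4 * k + 1), integral_mul_one_sub_pow_succ (4 * k), hI₀,
    seriesTerm]
  push_cast
  field_simp
  ring

theorem norm_seriesIntegrand_le (k : ℕ) {x : ℝ} (hx : x ∈ Set.Icc (0 : ℝ) 1) :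
    ‖seriesIntegrand k x‖ ≤ 12288 * (1 / 9) ^ k := by
  obtain ⟨ht0, ht1⟩ := mul_one_sub_mem_Icc hx
  set t := x * (1 - x)
  have hr : (t ^ 4 / 9) ^ k ≤ (1 / 9) ^ k :=
    pow_le_pow_left₀ (by positivity) (by linarith [pow_le_one₀ ht0 ht1 (n := 4)]) k
  have hP : |6144 - 3072 * t - 2048 * t ^ 2 + 1024 * t ^ 3| ≤ 12288 := by
    rw [abs_le]
    constructor <;> nlinarith [pow_le_one₀ ht0 ht1 (n := 2), pow_le_one₀ ht0 ht1 (n := 3),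
      pow_nonneg ht0 2, pow_nonneg ht0 3]
  rw [seriesIntegrand, norm_mul, norm_of_nonneg (by positivity), mul_comm]
  exact mul_le_mul hP hr (by positivity) (by norm_num)

noncomputable def seriesSum (x : ℝ) : ℝ :=
  4608 / (x ^ 2 + x + 1) + 4608 / (x ^ 2 - 3 * x + 3)

theorem hasSum_seriesIntegrand {x : ℝ} (hx : x ∈ Set.Icc (0 : ℝ) 1) :
    HasSum (fun k => seriesIntegrand k x) (seriesSum x) := by
  obtain ⟨ht0, ht1⟩ := mul_one_sub_mem_Icc hx
  set t := x * (1 - x) with ht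
  have hr : t ^ 4 / 9 < 1 := by linarith [pow_le_one₀ ht0 ht1 (n := 4)]
  have hq₁ : 0 < x ^ 2 + x + 1 := by nlinarith [sq_nonneg (2 * x + 1)]
  have hq₂ : 0 < x ^ 2 - 3 * x + 3 := by nlinarith [sq_nonneg (2 * x - 3)]
  have h3 : 3 - t ^ 2 ≠ 0 := by nlinarith
  have hgeom : (1 - t ^ 4 / 9)⁻¹ * (6144 - 3072 * t - 2048 * t ^ 2 + 1024 * t ^ 3) =
      9216 * (2 - t) / (3 + t ^ 2) := by
    rw [show 1 - t ^ 4 / 9 = (3 - t ^ 2) * (3 + t ^ 2) / 9 by ring,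
      show 6144 - 3072 * t - 2048 * t ^ 2 + 1024 * t ^ 3 = 1024 * (2 - t) * (3 - t ^ 2) by ring]
    field_simp
    ring
  have hprod : (x ^ 2 + x + 1) * (x ^ 2 - 3 * x + 3) = 3 + t ^ 2 := by rw [ht]; ring
  have hsum : seriesSum x = 9216 * (2 - t) / (3 + t ^ 2) := by
    rw [seriesSum, div_add_div _ _ hq₁.ne' hq₂.ne', hprod]
    congr 1
    rw [ht]
    ring
  rw [hsum, ← hgeom]
  exact (hasSum_geometric_of_lt_one (by positivity) hr).mul_right _

theorem integral_seriesSum : ∫ x in (0 : ℝ)..1, seriesSum x = 1024 * √3 * π := by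
  have hs : √3 ^ 2 = 3 := sq_sqrt (by norm_num)
  have hd : √3 / 2 ≠ 0 := by positivity
  have hsq (c x : ℝ) :
      (x - c) ^ 2 + (√3 / 2) ^ 2 = x ^ 2 - 2 * c * x + (c ^ 2 + 3 / 4) := by
    rw [div_pow, hs]; ring
  have hcont (c : ℝ) : IntervalIntegrable (fun x => 4608 * (1 / ((x - c) ^ 2 + (√3 / 2) ^ 2)))
      MeasureTheory.volume 0 1 :=
    (continuous_const.mul
      (continuous_const.div (by fun_prop) fun x => by positivity)).intervalIntegrable 0 1
  have key : seriesSum = fun x => 4608 * (1 / ((x - -1 / 2) ^ 2 + (√3 / 2) ^ 2)) +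
        4608 * (1 / ((x - 3 / 2) ^ 2 + (√3 / 2) ^ 2)) := by
    ext x
    rw [seriesSum, hsq, hsq]
    ring_nf
  rw [key, integral_add (hcont _) (hcont _), integral_const_mul, integral_const_mul,
    integral_one_div_sub_sq_add_sq _ _ _ hd, integral_one_div_sub_sq_add_sq _ _ _ hd]
  have e₁ : (1 - -1 / 2) / (√3 / 2) = √3 := by field_simp; linarith [hs]
  have e₂ : (0 - -1 / 2) / (√3 / 2) = (√3)⁻¹ := by field_simp; norm_num
  have e₃ : (1 - 3 / 2) / (√3 / 2) = -(√3)⁻¹ := by field_simp; norm_num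
  have e₄ : (0 - 3 / 2) / (√3 / 2) = -√3 := by field_simp; linarith [hs]
  rw [e₁, e₂, e₃, e₄, arctan_neg, arctan_neg, arctan_sqrt_three, arctan_inv_sqrt_three]
  field_simp
  rw [hs]
  ring

theorem abs_seriesTerm_le (k : ℕ) : |seriesTerm k| ≤ 12288 * (1 / 9) ^ k := by
  simpa [seriesTerm_eq_integral] using norm_integral_le_of_norm_le_const
    fun x hx => norm_seriesIntegrand_le k (mem_Icc_of_mem_uIoc zero_le_one hx)

theorem hasSum_seriesTerm : HasSum seriesTerm (1024 * √3 * π) := by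
  rw [← integral_seriesSum, show seriesTerm = _ from funext seriesTerm_eq_integral]
  exact hasSum_integral_of_dominated_convergence (fun k _ => 12288 * (1 / 9 : ℝ) ^ k)
    (fun k => (continuous_seriesIntegrand k).aestronglyMeasurable)
    (fun k => .of_forall fun x hx => norm_seriesIntegrand_le k (mem_Icc_of_mem_uIoc zero_le_one hx))
    (.of_forall fun _ _ => (summable_geometric_of_lt_one (by norm_num) (by norm_num)).mul_left _)
    intervalIntegrable_const
    (.of_forall fun x hx => hasSum_seriesIntegrand (mem_Icc_of_mem_uIoc zero_le_one hx))

theorem stmt7 :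
    Summable (fun k : ℕ =>
      |(1 / (9 ^ k * (Nat.choose (8 * k) (4 * k) : ℝ))) *
        (5717 / (8 * (k : ℝ) + 1) - 413 / (8 * (k : ℝ) + 3) -
          45 / (8 * (k : ℝ) + 5) + 5 / (8 * (k : ℝ) + 7))|) ∧
    1024 * Real.sqrt 3 * π =
      ∑' k : ℕ,
        (1 / (9 ^ k * (Nat.choose (8 * k) (4 * k) : ℝ))) *
          (5717 / (8 * (k : ℝ) + 1) - 413 / (8 * (k : ℝ) + 3) -
            45 / (8 * (k : ℝ) + 5) + 5 / (8 * (k : ℝ) + 7)) :=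
  ⟨Summable.of_nonneg_of_le (fun k => abs_nonneg (seriesTerm k)) abs_seriesTerm_le
      ((summable_geometric_of_lt_one (by norm_num) (by norm_num)).mul_left 12288),
    hasSum_seriesTerm.tsum_eq.symm⟩
end
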